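/- In the convolution algebra A_n, the linear span R of the set {e_t : t ∈ PT_n, t is not injective} is a two-sided ideal equal to the Jacobson radical of A_n; equivalently, R is a nilpotent two-sided ideal of A_n such that the quotient algebra A_n/R is semisimple. -/

import Mathlib

/-- The monoid of partial functions on `{1,…,n}`, modeled as `Fin n → Option (Fin n)`,
under composition of partial functions (right to left). -/
abbrev PT (n : ℕ) := Fin n → Option (Fin n)

namespace PT

variable {n : ℕ}

/-- Composition of partial functions, right to left: `comp s t = s ∘ t`. -/
def comp (s t : PT n) : PT n := fun x => (t x).bind s

/-- The domain of a partial function. -/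
def dom (t : PT n) : Finset (Fin n) := Finset.univ.filter fun x => (t x).isSome

/-- The image (range) of a partial function. -/
def ran (t : PT n) : Finset (Fin n) := Finset.univ.filter fun y => ∃ x, t x = some y

/-- The identity partial function on the subset `X`. -/
def idOn (X : Finset (Fin n)) : PT n := fun x => if x ∈ X then some x else none

instance : Monoid (PT n) where
  mul := comp
  one := fun x => some x
  mul_assoc s t w := by
    funext x
    show (w x).bind (fun z => (t z).bind s) = ((w x).bind t).bind s
    exact (Option.bind_assoc (w x) t s).symm
  one_mul t := by
    funext x
    show (t x).bind (fun y => some y) = t x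
    cases t x <;> rfl
  mul_one t := by
    funext x
    show (some x).bind t = t x
    rfl

end PT

namespace PT

variable {n : ℕ}

lemma mem_dom {t : PT n} {x : Fin n} : x ∈ dom t ↔ (t x).isSome := by simp [dom]

lemma mem_ran {t : PT n} {y : Fin n} : y ∈ ran t ↔ ∃ x, t x = some y := by simp [ran]

lemma comp_assoc (s t w : PT n) : comp (comp s t) w = comp s (comp t w) := mul_assoc s t w

lemma dom_comp {s t : PT n} (h : dom s = ran t) : dom (comp s t) = dom t := by
  ext x
  rw [mem_dom, mem_dom]
  show ((t x).bind s).isSome ↔ _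
  cases ht : t x with
  | none => simp
  | some a =>
    have ha : a ∈ dom s := by rw [h, mem_ran]; exact ⟨x, ht⟩
    rw [mem_dom] at ha
    simpa using ha
  

lemma ran_comp {t w : PT n} (h : dom t = ran w) : ran (comp t w) = ran t := by
  ext y
  rw [mem_ran, mem_ran]
  constructor
  · rintro ⟨x, hx⟩
    rcases Option.bind_eq_some_iff.mp hx with ⟨a, _, hta⟩
    exact ⟨a, hta⟩
  · rintro ⟨a, hta⟩
    have ha : a ∈ ran w := by
      rw [← h, mem_dom]
      simp [hta]
    rcases mem_ran.mp ha with ⟨x, hx⟩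
    exact ⟨x, by show (w x).bind t = some y; rw [hx]; exact hta⟩

lemma dom_idOn (X : Finset (Fin n)) : dom (idOn X) = X := by
  ext x
  rw [mem_dom, idOn]
  by_cases h : x ∈ X <;> simp [h]

lemma ran_idOn (X : Finset (Fin n)) : ran (idOn X) = X := by
  ext y
  rw [mem_ran]
  constructor
  · rintro ⟨x, hx⟩
    unfold idOn at hx
    split at hx
    · cases Option.some_injective _ hx; assumption
    · exact absurd hx (by simp)
  · intro hy
    exact ⟨y, by unfold idOn; rw [if_pos hy]⟩

lemma comp_idOn {s : PT n} : comp s (idOn (dom s)) = s := by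
  funext x
  show ((idOn (dom s)) x).bind s = s x
  unfold idOn
  by_cases h : x ∈ dom s
  · rw [if_pos h]; rfl
  · rw [if_neg h]
    rw [mem_dom] at h
    cases hs : s x with
    | none => rfl
    | some a => rw [hs] at h; simp at h

lemma idOn_comp {t : PT n} : comp (idOn (ran t)) t = t := by
  funext x
  show (t x).bind (idOn (ran t)) = t x
  cases ht : t x with
  | none => rfl
  | some a =>
    show idOn (ran t) a = some a
    unfold idOn
    rw [if_pos (mem_ran.mpr ⟨x, ht⟩)]

end PT

/-- The convolution algebra `A_n` of the epimorphism category: the vector space with basis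
`{e_t : t ∈ PT_n}` and multiplication `e_s · e_t = e_{s ∘ t}` if `dom s = im t`, else `0`. -/
noncomputable def PTAlg (n : ℕ) : Type := PT n →₀ ℂ

namespace PTAlg

variable {n : ℕ}

noncomputable instance : AddCommGroup (PTAlg n) := inferInstanceAs (AddCommGroup (PT n →₀ ℂ))
noncomputable instance : Module ℂ (PTAlg n) := inferInstanceAs (Module ℂ (PT n →₀ ℂ))

/-- The coefficient of `t` in an element of `A_n`. -/
noncomputable def coeff (a : PTAlg n) : PT n → ℂ := fun t => (show PT n →₀ ℂ from a) t

/-- The basis element `e_t` of `A_n`. -/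
noncomputable def e (t : PT n) : PTAlg n := show PT n →₀ ℂ from Finsupp.single t 1

/-- Convolution: `e_s · e_t = e_{s ∘ t}` if `dom s = im t`, and `0` otherwise. -/
noncomputable instance : Mul (PTAlg n) :=
  ⟨fun a b =>
    show PT n →₀ ℂ from
      Finsupp.equivFunOnFinite.symm fun u =>
        ∑ p : PT n × PT n,
          if PT.dom p.1 = PT.ran p.2 ∧ PT.comp p.1 p.2 = u then coeff a p.1 * coeff b p.2
          else 0⟩

/-- The multiplicative unit of `A_n` is `∑_{X ⊆ {1,…,n}} e_{id_X}`. -/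
noncomputable instance : One (PTAlg n) := ⟨∑ X : Finset (Fin n), e (PT.idOn X)⟩

end PTAlg

namespace PTAlg

variable {n : ℕ}

open PT

lemma ext' {a b : PTAlg n} (h : ∀ u, coeff a u = coeff b u) : a = b := Finsupp.ext h

lemma coeff_mul (a b : PTAlg n) (u : PT n) :
    coeff (a * b) u =
      ∑ p : PT n × PT n,
        if dom p.1 = ran p.2 ∧ comp p.1 p.2 = u then coeff a p.1 * coeff b p.2 else 0 :=
  Finsupp.equivFunOnFinite_symm_apply_apply _ _

lemma coeff_add (a b : PTAlg n) (u : PT n) : coeff (a + b) u = coeff a u + coeff b u := rfl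

lemma coeff_zero (u : PT n) : coeff (0 : PTAlg n) u = 0 := rfl

lemma coeff_smul (r : ℂ) (a : PTAlg n) (u : PT n) : coeff (r • a) u = r * coeff a u := rfl

lemma coeff_e (t u : PT n) : coeff (e t) u = if t = u then 1 else 0 := Finsupp.single_apply

lemma coeff_one (u : PT n) :
    coeff (1 : PTAlg n) u = if u = idOn (dom u) then 1 else 0 := by
  show coeff (∑ X : Finset (Fin n), e (idOn X)) u = _
  have : ∀ (l : Finset (Finset (Fin n))), coeff (∑ X ∈ l, e (idOn X)) u
      = ∑ X ∈ l, coeff (e (idOn X)) u := by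
    intro l
    induction l using Finset.induction_on with
    | empty => simp [coeff_zero]
    | insert _ _ hx ih => rw [Finset.sum_insert hx, Finset.sum_insert hx, coeff_add, ih]
  rw [this]
  by_cases h : u = idOn (dom u)
  · rw [if_pos h]
    rw [Finset.sum_eq_single (dom u)]
    · rw [coeff_e, if_pos h.symm]
    · intro X _ hX
      rw [coeff_e, if_neg]
      intro hc
      apply hX
      rw [← dom_idOn X, hc]
    · intro habs; exact absurd (Finset.mem_univ _) habs
  · rw [if_neg h]
    apply Finset.sum_eq_zero
    intro X _
    rw [coeff_e, if_neg]
    intro hc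
    apply h
    have : dom u = X := by rw [← hc, dom_idOn]
    rw [this, hc]

end PTAlg

namespace PTAlg

variable {n : ℕ}
open PT

lemma left_distrib' (a b c : PTAlg n) : a * (b + c) = a * b + a * c := by
  apply ext'; intro u
  rw [coeff_add, coeff_mul, coeff_mul, coeff_mul, ← Finset.sum_add_distrib]
  apply Finset.sum_congr rfl
  intro p _
  split_ifs with h
  · rw [coeff_add]; ring
  · rw [add_zero]

lemma right_distrib' (a b c : PTAlg n) : (a + b) * c = a * c + b * c := by
  apply ext'; intro u
  rw [coeff_add, coeff_mul, coeff_mul, coeff_mul, ← Finset.sum_add_distrib]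
  apply Finset.sum_congr rfl
  intro p _
  split_ifs with h
  · rw [coeff_add]; ring
  · rw [add_zero]

lemma zero_mul' (a : PTAlg n) : 0 * a = 0 := by
  apply ext'; intro u
  rw [coeff_mul, coeff_zero]
  apply Finset.sum_eq_zero
  intro p _
  split_ifs with h
  · rw [coeff_zero, zero_mul]
  · rfl

lemma mul_zero' (a : PTAlg n) : a * 0 = 0 := by
  apply ext'; intro u
  rw [coeff_mul, coeff_zero]
  apply Finset.sum_eq_zero
  intro p _
  split_ifs with h
  · rw [coeff_zero, mul_zero]
  · rfl

lemma mul_one' (a : PTAlg n) : a * 1 = a := by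
  apply ext'
  intro u
  rw [coeff_mul]
  rw [Finset.sum_eq_single ((u, idOn (dom u)) : PT n × PT n)]
  · rw [if_pos ⟨by rw [ran_idOn], comp_idOn⟩, coeff_one, if_pos (by rw [dom_idOn]), mul_one]
  · rintro ⟨s, t⟩ _ hne
    dsimp only at hne ⊢
    split_ifs with hcond
    · obtain ⟨h1, h2⟩ := hcond
      rw [coeff_one]
      split_ifs with ht
      · exfalso
        apply hne
        rw [ht, ran_idOn] at h1
        rw [ht, ← h1, comp_idOn] at h2
        subst h2
        rw [Prod.mk.injEq]
        refine ⟨rfl, ?_⟩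
        rw [ht, h1]
      · rw [mul_zero]
    · rfl
  · intro habs; exact absurd (Finset.mem_univ _) habs

lemma one_mul' (a : PTAlg n) : 1 * a = a := by
  apply ext'
  intro u
  rw [coeff_mul]
  rw [Finset.sum_eq_single ((idOn (ran u), u) : PT n × PT n)]
  · rw [if_pos ⟨by rw [dom_idOn], idOn_comp⟩, coeff_one, if_pos (by rw [dom_idOn]), one_mul]
  · rintro ⟨s, t⟩ _ hne
    dsimp only at hne ⊢
    split_ifs with hcond
    · obtain ⟨h1, h2⟩ := hcond
      rw [coeff_one]
      split_ifs with hs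
      · exfalso
        apply hne
        rw [hs, h1, idOn_comp] at h2
        subst h2
        rw [Prod.mk.injEq]
        refine ⟨?_, rfl⟩
        rw [hs, h1]
      · rw [zero_mul]
    · rfl
  · intro habs; exact absurd (Finset.mem_univ _) habs

end PTAlg

namespace PTAlg

variable {n : ℕ}
open PT

lemma key_left (a b c : PTAlg n) (u w : PT n) :
    (∑ q1 : PT n, if dom q1 = ran w ∧ comp q1 w = u then coeff (a * b) q1 * coeff c w else 0)
      = ∑ s : PT n, ∑ t : PT n,
          if dom s = ran t ∧ dom t = ran w ∧ comp (comp s t) w = u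
          then coeff a s * coeff b t * coeff c w else 0 := by
  have step : ∀ q1 : PT n,
      (if dom q1 = ran w ∧ comp q1 w = u then coeff (a * b) q1 * coeff c w else 0)
        = ∑ s : PT n, ∑ t : PT n,
            if (dom s = ran t ∧ comp s t = q1) ∧ (dom q1 = ran w ∧ comp q1 w = u)
            then coeff a s * coeff b t * coeff c w else 0 := by
    intro q1
    by_cases h : dom q1 = ran w ∧ comp q1 w = u
    · rw [if_pos h, coeff_mul, Fintype.sum_prod_type, Finset.sum_mul]
      apply Finset.sum_congr rfl
      intro s _
      rw [Finset.sum_mul]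
      apply Finset.sum_congr rfl
      intro t _
      rw [ite_mul, zero_mul]
      by_cases h2 : dom s = ran t ∧ comp s t = q1
      · rw [if_pos h2, if_pos ⟨h2, h⟩]
      · rw [if_neg h2, if_neg (fun hc => h2 hc.1)]
    · rw [if_neg h]
      symm
      apply Finset.sum_eq_zero; intro s _
      apply Finset.sum_eq_zero; intro t _
      exact if_neg (fun hc => h hc.2)
  rw [Finset.sum_congr rfl (fun q1 _ => step q1), Finset.sum_comm]
  apply Finset.sum_congr rfl
  intro s _
  rw [Finset.sum_comm]
  apply Finset.sum_congr rfl
  intro t _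
  rw [Finset.sum_eq_single (comp s t)]
  · apply if_congr _ rfl rfl
    constructor
    · rintro ⟨⟨h1, -⟩, h2, h3⟩
      exact ⟨h1, by rw [← dom_comp h1]; exact h2, h3⟩
    · rintro ⟨h1, h2, h3⟩
      exact ⟨⟨h1, rfl⟩, by rw [dom_comp h1]; exact h2, h3⟩
  · intro q1 _ hne
    apply if_neg
    rintro ⟨⟨-, hq⟩, -⟩
    exact hne hq.symm
  · intro habs; exact absurd (Finset.mem_univ _) habs

lemma key_right (a b c : PTAlg n) (u s : PT n) :
    (∑ q2 : PT n, if dom s = ran q2 ∧ comp s q2 = u then coeff a s * coeff (b * c) q2 else 0)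
      = ∑ t : PT n, ∑ w : PT n,
          if dom s = ran t ∧ dom t = ran w ∧ comp (comp s t) w = u
          then coeff a s * coeff b t * coeff c w else 0 := by
  have step : ∀ q2 : PT n,
      (if dom s = ran q2 ∧ comp s q2 = u then coeff a s * coeff (b * c) q2 else 0)
        = ∑ t : PT n, ∑ w : PT n,
            if (dom t = ran w ∧ comp t w = q2) ∧ (dom s = ran q2 ∧ comp s q2 = u)
            then coeff a s * coeff b t * coeff c w else 0 := by
    intro q2
    by_cases h : dom s = ran q2 ∧ comp s q2 = u
    · rw [if_pos h, coeff_mul, Fintype.sum_prod_type, Finset.mul_sum]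
      apply Finset.sum_congr rfl
      intro t _
      rw [Finset.mul_sum]
      apply Finset.sum_congr rfl
      intro w _
      rw [mul_ite, mul_zero]
      by_cases h2 : dom t = ran w ∧ comp t w = q2
      · rw [if_pos h2, if_pos ⟨h2, h⟩, mul_assoc]
      · rw [if_neg h2, if_neg (fun hc => h2 hc.1)]
    · rw [if_neg h]
      symm
      apply Finset.sum_eq_zero; intro t _
      apply Finset.sum_eq_zero; intro w _
      exact if_neg (fun hc => h hc.2)
  rw [Finset.sum_congr rfl (fun q2 _ => step q2), Finset.sum_comm]
  apply Finset.sum_congr rfl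
  intro t _
  rw [Finset.sum_comm]
  apply Finset.sum_congr rfl
  intro w _
  rw [Finset.sum_eq_single (comp t w)]
  · apply if_congr _ rfl rfl
    constructor
    · rintro ⟨⟨h1, -⟩, h2, h3⟩
      refine ⟨by rw [← ran_comp h1]; exact h2, h1, ?_⟩
      rw [comp_assoc]; exact h3
    · rintro ⟨h1, h2, h3⟩
      exact ⟨⟨h2, rfl⟩, by rw [ran_comp h2]; exact h1, by rw [← comp_assoc]; exact h3⟩
  · intro q2 _ hne
    apply if_neg
    rintro ⟨⟨-, hq⟩, -⟩
    exact hne hq.symm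
  · intro habs; exact absurd (Finset.mem_univ _) habs

lemma coeff_mul_mul (a b c : PTAlg n) (u : PT n) :
    coeff (a * b * c) u =
      ∑ s : PT n, ∑ t : PT n, ∑ w : PT n,
        if dom s = ran t ∧ dom t = ran w ∧ comp (comp s t) w = u
        then coeff a s * coeff b t * coeff c w else 0 := by
  rw [coeff_mul, Fintype.sum_prod_type, Finset.sum_comm]
  calc (∑ w : PT n, ∑ q1 : PT n,
          if dom q1 = ran w ∧ comp q1 w = u then coeff (a * b) q1 * coeff c w else 0)
      = ∑ w : PT n, ∑ s : PT n, ∑ t : PT n,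
          if dom s = ran t ∧ dom t = ran w ∧ comp (comp s t) w = u
          then coeff a s * coeff b t * coeff c w else 0 :=
        Finset.sum_congr rfl fun w _ => key_left a b c u w
    _ = ∑ s : PT n, ∑ w : PT n, ∑ t : PT n,
          if dom s = ran t ∧ dom t = ran w ∧ comp (comp s t) w = u
          then coeff a s * coeff b t * coeff c w else 0 := Finset.sum_comm
    _ = ∑ s : PT n, ∑ t : PT n, ∑ w : PT n,
          if dom s = ran t ∧ dom t = ran w ∧ comp (comp s t) w = u
          then coeff a s * coeff b t * coeff c w else 0 :=
        Finset.sum_congr rfl fun s _ => Finset.sum_comm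

lemma coeff_mul_mul' (a b c : PTAlg n) (u : PT n) :
    coeff (a * (b * c)) u =
      ∑ s : PT n, ∑ t : PT n, ∑ w : PT n,
        if dom s = ran t ∧ dom t = ran w ∧ comp (comp s t) w = u
        then coeff a s * coeff b t * coeff c w else 0 := by
  rw [coeff_mul, Fintype.sum_prod_type]
  exact Finset.sum_congr rfl fun s _ => key_right a b c u s

lemma mul_assoc' (a b c : PTAlg n) : a * b * c = a * (b * c) :=
  ext' fun u => (coeff_mul_mul a b c u).trans (coeff_mul_mul' a b c u).symm

noncomputable instance : Ring (PTAlg n) :=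
  { (inferInstance : AddCommGroup (PTAlg n)) with
    mul := (· * ·)
    one := 1
    mul_assoc := mul_assoc'
    one_mul := one_mul'
    mul_one := mul_one'
    left_distrib := left_distrib'
    right_distrib := right_distrib'
    zero_mul := zero_mul'
    mul_zero := mul_zero' }

noncomputable instance : Algebra ℂ (PTAlg n) :=
  Algebra.ofModule
    (fun r x y => by
      apply ext'; intro u
      rw [coeff_smul, coeff_mul, coeff_mul, Finset.mul_sum]
      apply Finset.sum_congr rfl
      intro p _
      split_ifs with h
      · rw [coeff_smul]; ring
      · rw [mul_zero])
    (fun r x y => by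
      apply ext'; intro u
      rw [coeff_smul, coeff_mul, coeff_mul, Finset.mul_sum]
      apply Finset.sum_congr rfl
      intro p _
      split_ifs with h
      · rw [coeff_smul]; ring
      · rw [mul_zero])

end PTAlg

namespace PT

/-- A partial function is injective (on its domain). -/
def Inj {n : ℕ} (t : PT n) : Prop := ∀ x y z, t x = some z → t y = some z → x = y

end PT


/-!
A product `e_s e_t` involving a non-injective factor is again `e_u` with `u` non-injective, and
a non-injective `s` has `#(im s) < #(dom s)`; so `R` is a two-sided ideal, and each factor from
`R` in a product lowers the size of the image, whence `R ^ (n + 1) = 0`. Modulo `R` only the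
partial bijections survive, and the quotient is the algebra of the groupoid of bijections between
subsets of `{1,…,n}`. As for group algebras it is semisimple by averaging: with `N(X)` the number
of partial injections with domain `X`, `∑_t N(dom t)⁻¹ ē_{t⁻¹} ⊗ ē_t` is a separability element,
and it turns any linear projection onto a left ideal into an equivariant one. Finally a nilpotent
ideal lies in the Jacobson radical, which in turn lies in every ideal with semisimple quotient.
-/

open TensorProduct in
theorem IsSemisimpleModule.of_sum_tmul_comm {k B : Type*} [Field k] [Ring B] [Algebra k B]
    {ι : Type*} (s : Finset ι) (a b : ι → B) (h_one : ∑ i ∈ s, a i * b i = 1)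
    (h_comm : ∀ x, ∑ i ∈ s, (x * a i) ⊗ₜ[k] b i = ∑ i ∈ s, a i ⊗ₜ[k] (b i * x))
    (M : Type*) [AddCommGroup M] [Module B M] [Module k M] [IsScalarTower k B M] :
    IsSemisimpleModule B M := by
  refine (isSemisimpleModule_iff B M).mpr ⟨fun p => ?_⟩
  obtain ⟨q, hq⟩ := Submodule.exists_isCompl (p.restrictScalars k)
  let π : M →ₗ[k] M := (p.restrictScalars k).projection q hq
  have hπ_mem (v : M) : π v ∈ p := Submodule.projection_apply_mem hq v
  have hπ_id {v : M} (hv : v ∈ p) : π v = v := Submodule.projection_apply_of_mem_left hq hv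
  -- `u ⊗ w ↦ u • π (w • v)`, evaluated on both sides of `h_comm`, makes the average `B`-linear
  let Φ (v : M) : B ⊗[k] B →ₗ[k] M :=
    lift (LinearMap.mk₂ k (fun u w => u • π (w • v)) (fun _ _ _ => add_smul _ _ _)
      (fun _ _ _ => smul_assoc _ _ _) (fun _ _ _ => by rw [add_smul, map_add, smul_add])
      (fun _ _ _ => by rw [smul_assoc, map_smul, smul_comm]))
  let g : M →ₗ[B] M :=
    { toFun := fun v => ∑ i ∈ s, a i • π (b i • v)
      map_add' := fun v w => by simp only [smul_add, map_add, Finset.sum_add_distrib]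
      map_smul' := fun x v => by
        have := congrArg (Φ v) (h_comm x)
        simp only [map_sum, Φ, lift.tmul, LinearMap.mk₂_apply, mul_smul] at this
        simp only [RingHom.id_apply, Finset.smul_sum, ← this] }
  refine ⟨LinearMap.ker (g.codRestrict p fun v => p.sum_mem fun i _ => p.smul_mem _ (hπ_mem _)),
    LinearMap.isCompl_of_proj fun v => Subtype.ext ?_⟩
  change ∑ i ∈ s, a i • π (b i • (v : M)) = v
  simp only [hπ_id (p.smul_mem _ v.2), smul_smul, ← Finset.sum_smul, h_one, one_smul]

theorem mem_jacobson_bot_of_isNilpotent_mul {A : Type*} [Ring A] {x : A}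
    (h : ∀ y, IsNilpotent (y * x)) : x ∈ Ideal.jacobson (⊥ : Ideal A) := by
  refine Ideal.mem_jacobson_iff.mpr fun y => ?_
  obtain ⟨z, hz⟩ := (h y).isUnit_add_one.exists_left_inv
  exact ⟨z, by rw [mul_assoc, ← mul_add_one, hz, sub_self]; exact zero_mem _⟩

theorem TwoSidedIdeal.mem_of_mem_jacobson_bot {A : Type*} [Ring A] (I : TwoSidedIdeal A)
    [IsSemisimpleRing I.ringCon.Quotient] {x : A} (hx : x ∈ Ideal.jacobson (⊥ : Ideal A)) :
    x ∈ I := by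
  have : RingHomSurjective I.ringCon.mk' := ⟨Quotient.mk''_surjective⟩
  rw [Ideal.jacobson_bot] at hx
  have hx' := Ring.le_comap_jacobson I.ringCon.mk' hx
  rw [IsSemisimpleRing.jacobson_eq_bot, Ideal.mem_comap, Ideal.mem_bot] at hx'
  exact (TwoSidedIdeal.mem_iff I x).mpr ((RingCon.eq _).mp hx')

namespace PT

variable {n : ℕ}

instance (t : PT n) : Decidable (Inj t) := by unfold Inj; infer_instance

lemma idOn_eq_some {X : Finset (Fin n)} {x y : Fin n} :
    idOn X x = some y ↔ x ∈ X ∧ x = y := by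
  unfold idOn; split_ifs with h <;> simp [h]

lemma inj_idOn (X : Finset (Fin n)) : Inj (idOn X) := by
  intro x y z hx hy
  rw [idOn_eq_some] at hx hy
  exact hx.2.trans hy.2.symm

lemma comp_eq_some {s t : PT n} {x z : Fin n} :
    comp s t x = some z ↔ ∃ y, t x = some y ∧ s y = some z :=
  Option.bind_eq_some_iff

lemma Inj.comp {s t : PT n} (hs : Inj s) (ht : Inj t) : Inj (comp s t) := by
  intro x y z hx hy
  obtain ⟨a, ha, ha'⟩ := comp_eq_some.mp hx
  obtain ⟨b, hb, hb'⟩ := comp_eq_some.mp hy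
  exact ht x y a ha (hs a b z ha' hb' ▸ hb)

lemma inj_of_inj_comp_right {s t : PT n} (h : dom s = ran t) (hc : Inj (comp s t)) :
    Inj t := by
  intro x y z hx hy
  obtain ⟨w, hw⟩ := Option.isSome_iff_exists.mp (mem_dom.mp (h ▸ mem_ran.mpr ⟨x, hx⟩))
  exact hc x y w (comp_eq_some.mpr ⟨z, hx, hw⟩) (comp_eq_some.mpr ⟨z, hy, hw⟩)

lemma inj_of_inj_comp_left {s t : PT n} (h : dom t = ran s) (hc : Inj (comp t s)) :
    Inj t := by
  intro x y z hx hy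
  obtain ⟨x', hx'⟩ := mem_ran.mp (h ▸ mem_dom.mpr (by simp [hx]) : x ∈ ran s)
  obtain ⟨y', hy'⟩ := mem_ran.mp (h ▸ mem_dom.mpr (by simp [hy]) : y ∈ ran s)
  have := hc x' y' z (comp_eq_some.mpr ⟨x, hx', hx⟩) (comp_eq_some.mpr ⟨y, hy', hy⟩)
  exact Option.some_inj.mp (hx'.symm.trans (this ▸ hy'))

lemma ran_eq_image_dom (t : PT n) : ran t = (dom t).image fun x => (t x).getD x := by
  ext y
  simp only [mem_ran, Finset.mem_image, mem_dom, Option.isSome_iff_exists]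
  constructor
  · rintro ⟨x, hx⟩
    exact ⟨x, ⟨y, hx⟩, by simp [hx]⟩
  · rintro ⟨x, ⟨z, hz⟩, rfl⟩
    exact ⟨x, by simp [hz]⟩

lemma card_ran_lt_card_dom {t : PT n} (ht : ¬ Inj t) : (ran t).card < (dom t).card := by
  rw [ran_eq_image_dom]
  refine lt_of_le_of_ne Finset.card_image_le fun h => ht fun x y z hx hy => ?_
  refine Finset.card_image_iff.mp h (mem_dom.mpr (by simp [hx])) (mem_dom.mpr (by simp [hy])) ?_
  simp [hx, hy]

/-- The inverse of a partial injection (a junk value unless `t` is injective). -/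
noncomputable def inv (t : PT n) : PT n := fun y =>
  if h : ∃ x, t x = some y then some h.choose else none

lemma inv_eq_some {t : PT n} (ht : Inj t) {x y : Fin n} : inv t y = some x ↔ t x = some y := by
  unfold inv
  split_ifs with h
  · exact ⟨fun hx => Option.some_inj.mp hx ▸ h.choose_spec,
      fun hx => congrArg some (ht _ _ _ h.choose_spec hx)⟩
  · exact ⟨fun hx => absurd hx (by simp), fun hx => absurd ⟨x, hx⟩ h⟩

lemma inj_inv {t : PT n} (ht : Inj t) : Inj (inv t) := by
  intro x y z hx hy
  rw [inv_eq_some ht] at hx hy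
  exact Option.some_inj.mp (hx.symm.trans hy)

lemma dom_inv {t : PT n} (ht : Inj t) : dom (inv t) = ran t := by
  ext y
  simp only [mem_dom, mem_ran, Option.isSome_iff_exists, inv_eq_some ht]

lemma ran_inv {t : PT n} (ht : Inj t) : ran (inv t) = dom t := by
  ext x
  simp only [mem_dom, mem_ran, Option.isSome_iff_exists, inv_eq_some ht]

lemma inv_comp_self {t : PT n} (ht : Inj t) : comp (inv t) t = idOn (dom t) := by
  funext x
  refine Option.ext fun z => ?_
  simp only [comp_eq_some, inv_eq_some ht, idOn_eq_some, mem_dom, Option.isSome_iff_exists]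
  exact ⟨fun ⟨y, hx, hz⟩ => ⟨⟨y, hx⟩, ht x z y hx hz⟩,
    fun ⟨⟨y, hx⟩, hxz⟩ => ⟨y, hx, hxz ▸ hx⟩⟩

lemma self_comp_inv {t : PT n} (ht : Inj t) : comp t (inv t) = idOn (ran t) := by
  funext y
  refine Option.ext fun z => ?_
  simp only [comp_eq_some, inv_eq_some ht, idOn_eq_some, mem_ran]
  exact ⟨fun ⟨x, hx, hz⟩ => ⟨⟨x, hx⟩, Option.some_inj.mp (hx.symm.trans hz)⟩,
    fun ⟨⟨x, hx⟩, hyz⟩ => ⟨x, hx, hyz ▸ hx⟩⟩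

lemma comp_inv_comp {s t : PT n} (hs : Inj s) (ht : Inj t) (h : dom t = ran s) :
    comp s (inv (comp t s)) = inv t := by
  funext y
  refine Option.ext fun a => ?_
  simp only [comp_eq_some, inv_eq_some (ht.comp hs), inv_eq_some ht]
  constructor
  · rintro ⟨x, ⟨b, hb, hy⟩, hx⟩
    exact Option.some_inj.mp (hb.symm.trans hx) ▸ hy
  · intro ha
    obtain ⟨x, hx⟩ := mem_ran.mp (h ▸ mem_dom.mpr (by simp [ha]) : a ∈ ran s)
    exact ⟨x, ⟨a, hx, ha⟩, hx⟩

def injWithDom (X : Finset (Fin n)) : Finset (PT n) :=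
  Finset.univ.filter fun t => Inj t ∧ dom t = X

lemma mem_injWithDom {X : Finset (Fin n)} {t : PT n} :
    t ∈ injWithDom X ↔ Inj t ∧ dom t = X := by
  simp [injWithDom]

lemma idOn_mem_injWithDom (X : Finset (Fin n)) : idOn X ∈ injWithDom X :=
  mem_injWithDom.mpr ⟨inj_idOn X, dom_idOn X⟩

lemma sum_injWithDom_ran_comp {M : Type*} [AddCommMonoid M] {s : PT n} (hs : Inj s)
    (f : PT n → M) :
    ∑ t ∈ injWithDom (ran s), f (comp t s) = ∑ t ∈ injWithDom (dom s), f t := by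
  refine Finset.sum_nbij' (fun t => comp t s) (fun t => comp t (inv s)) ?_ ?_ ?_ ?_ fun _ _ => rfl
  · intro t ht
    obtain ⟨hti, htd⟩ := mem_injWithDom.mp ht
    exact mem_injWithDom.mpr ⟨hti.comp hs, dom_comp htd⟩
  · intro t ht
    obtain ⟨hti, htd⟩ := mem_injWithDom.mp ht
    refine mem_injWithDom.mpr ⟨hti.comp (inj_inv hs), ?_⟩
    rw [dom_comp (by rw [ran_inv hs, htd]), dom_inv hs]
  · intro t ht
    rw [mem_injWithDom] at ht
    simp only [comp_assoc, self_comp_inv hs, ← ht.2, comp_idOn]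
  · intro t ht
    rw [mem_injWithDom] at ht
    simp only [comp_assoc, inv_comp_self hs, ← ht.2, comp_idOn]

lemma card_injWithDom_ran {s : PT n} (hs : Inj s) :
    (injWithDom (ran s)).card = (injWithDom (dom s)).card := by
  simpa only [Finset.card_eq_sum_ones] using sum_injWithDom_ran_comp hs fun _ => 1

end PT

namespace PTAlg

variable {n : ℕ}

open PT TensorProduct

lemma span_range_e : Submodule.span ℂ (Set.range (e : PT n → PTAlg n)) = ⊤ :=
  (Finsupp.basisSingleOne : Module.Basis (PT n) ℂ (PT n →₀ ℂ)).span_eq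

lemma e_mul_e (s t : PT n) : e s * e t = if dom s = ran t then e (comp s t) else 0 := by
  refine ext' fun u => ?_
  rw [coeff_mul, Finset.sum_eq_single (s, t)]
  · split_ifs with h₁ h₂ h₂ <;> simp_all [coeff_e, coeff_zero]
  · rintro ⟨s', t'⟩ - hne
    split_ifs
    · rw [coeff_e, coeff_e]
      split_ifs <;> simp_all
    · rfl
  · simp

def nonInjBasis (n : ℕ) : Set (PTAlg n) := {x | ∃ t : PT n, ¬ Inj t ∧ x = e t}

noncomputable def nonInjSpan (n : ℕ) : Submodule ℂ (PTAlg n) :=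
  Submodule.span ℂ (nonInjBasis n)

lemma top_mul_nonInjSpan_le : ⊤ * nonInjSpan n ≤ nonInjSpan n := by
  rw [← span_range_e, nonInjSpan, Submodule.span_mul_span, Submodule.span_le]
  rintro _ ⟨_, ⟨s, rfl⟩, _, ⟨t, ht, rfl⟩, rfl⟩
  simp only [SetLike.mem_coe, e_mul_e]
  split_ifs with h
  · exact Submodule.subset_span ⟨_, fun hc => ht (inj_of_inj_comp_right h hc), rfl⟩
  · exact zero_mem _

lemma nonInjSpan_mul_top_le : nonInjSpan n * ⊤ ≤ nonInjSpan n := by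
  rw [← span_range_e, nonInjSpan, Submodule.span_mul_span, Submodule.span_le]
  rintro _ ⟨_, ⟨s, hs, rfl⟩, _, ⟨t, rfl⟩, rfl⟩
  simp only [SetLike.mem_coe, e_mul_e]
  split_ifs with h
  · exact Submodule.subset_span ⟨_, fun hc => hs (inj_of_inj_comp_left h hc), rfl⟩
  · exact zero_mem _

lemma mul_mem_nonInjSpan_left (a : PTAlg n) {r : PTAlg n} (hr : r ∈ nonInjSpan n) :
    a * r ∈ nonInjSpan n :=
  top_mul_nonInjSpan_le (Submodule.mul_mem_mul Submodule.mem_top hr)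

lemma mul_mem_nonInjSpan_right (a : PTAlg n) {r : PTAlg n} (hr : r ∈ nonInjSpan n) :
    r * a ∈ nonInjSpan n :=
  nonInjSpan_mul_top_le (Submodule.mul_mem_mul hr Submodule.mem_top)

noncomputable def rankFiltration (n m : ℕ) : Submodule ℂ (PTAlg n) :=
  Submodule.span ℂ {x | ∃ t : PT n, (ran t).card + m ≤ n ∧ x = e t}

lemma nonInjSpan_le_rankFiltration_one : nonInjSpan n ≤ rankFiltration n 1 := by
  refine Submodule.span_le.mpr ?_
  rintro _ ⟨t, ht, rfl⟩
  have := (card_ran_lt_card_dom ht).trans_le ((dom t).card_le_univ.trans_eq (Fintype.card_fin n))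
  exact Submodule.subset_span ⟨t, this, rfl⟩

lemma nonInjSpan_mul_rankFiltration_le (m : ℕ) :
    nonInjSpan n * rankFiltration n m ≤ rankFiltration n (m + 1) := by
  rw [nonInjSpan, rankFiltration, Submodule.span_mul_span, Submodule.span_le]
  rintro _ ⟨_, ⟨s, hs, rfl⟩, _, ⟨t, ht, rfl⟩, rfl⟩
  simp only [SetLike.mem_coe, e_mul_e]
  split_ifs with h
  · have := card_ran_lt_card_dom hs
    rw [h] at this
    exact Submodule.subset_span ⟨_, by rw [ran_comp h]; omega, rfl⟩
  · exact zero_mem _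

lemma nonInjSpan_pow_succ_le (m : ℕ) : nonInjSpan n ^ (m + 1) ≤ rankFiltration n (m + 1) := by
  induction m with
  | zero => simpa using nonInjSpan_le_rankFiltration_one
  | succ m ih =>
    rw [pow_succ']
    exact (mul_le_mul_right ih _).trans (nonInjSpan_mul_rankFiltration_le _)

lemma nonInjSpan_pow_eq_bot : nonInjSpan n ^ (n + 1) = ⊥ := by
  refine eq_bot_iff.mpr ((nonInjSpan_pow_succ_le n).trans (Submodule.span_le.mpr ?_))
  rintro _ ⟨t, ht, rfl⟩
  omega

lemma isNilpotent_of_mem_nonInjSpan {x : PTAlg n} (hx : x ∈ nonInjSpan n) : IsNilpotent x :=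
  ⟨n + 1, (Submodule.mem_bot ℂ).mp
    (nonInjSpan_pow_eq_bot ▸ Submodule.pow_mem_pow (nonInjSpan n) hx (n + 1))⟩

lemma mem_twoSidedSpan_nonInjBasis {x : PTAlg n} :
    x ∈ TwoSidedIdeal.span (nonInjBasis n) ↔ x ∈ nonInjSpan n := by
  let I := TwoSidedIdeal.mk' (nonInjSpan n : Set (PTAlg n)) (zero_mem _) add_mem neg_mem
    (mul_mem_nonInjSpan_left _) (mul_mem_nonInjSpan_right _)
  refine ⟨fun hx => ?_, fun hx => ?_⟩
  · have hle : TwoSidedIdeal.span (nonInjBasis n) ≤ I :=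
      TwoSidedIdeal.span_le.mpr fun _ hy => (TwoSidedIdeal.mem_mk' ..).mpr (Submodule.subset_span hy)
    exact (TwoSidedIdeal.mem_mk' ..).mp (hle hx)
  · have hle : nonInjSpan n ≤ (TwoSidedIdeal.span (nonInjBasis n)).asIdeal.restrictScalars ℂ :=
      Submodule.span_le.mpr TwoSidedIdeal.subset_span
    exact hle hx

abbrev QuotNonInj (n : ℕ) := (TwoSidedIdeal.span (nonInjBasis n)).ringCon.Quotient

noncomputable def ebar (t : PT n) : QuotNonInj n := RingCon.mkₐ ℂ _ (e t)

lemma ebar_eq_zero {t : PT n} (ht : ¬ Inj t) : ebar t = 0 :=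
  (RingCon.eq _).mpr <| (TwoSidedIdeal.mem_iff _ _).mp <| TwoSidedIdeal.subset_span ⟨t, ht, rfl⟩

lemma ebar_mul_ebar (s t : PT n) :
    ebar s * ebar t = if dom s = ran t then ebar (comp s t) else 0 := by
  rw [ebar, ebar, ← map_mul, e_mul_e]
  split_ifs
  · rfl
  · exact map_zero _

lemma sum_ebar_idOn : ∑ X : Finset (Fin n), ebar (idOn X) = 1 := by
  simp only [ebar, ← map_sum, ← map_one (RingCon.mkₐ ℂ _)]
  rfl

lemma span_range_ebar : Submodule.span ℂ (Set.range (ebar : PT n → QuotNonInj n)) = ⊤ := by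
  rw [show Set.range ebar =
      (RingCon.mkₐ ℂ _).toLinearMap '' Set.range (e : PT n → PTAlg n) from Set.range_comp _ _,
    Submodule.span_image, span_range_e, Submodule.map_top,
    LinearMap.range_eq_top]
  exact Quotient.mk''_surjective

noncomputable def weight (X : Finset (Fin n)) : ℂ := ((injWithDom X).card : ℂ)⁻¹

lemma weight_ran {s : PT n} (hs : Inj s) : weight (ran s) = weight (dom s) := by
  rw [weight, weight, card_injWithDom_ran hs]

/-- Indexes the separability element `∑ weight X • ebar t⁻¹ ⊗ ebar t` of `A_n / R`. -/
def sepIndex (n : ℕ) : Finset (Σ _ : Finset (Fin n), PT n) := Finset.univ.sigma injWithDom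

lemma sum_sepIndex_mul :
    ∑ i ∈ sepIndex n, (weight i.1 • ebar (inv i.2)) * ebar i.2 = 1 := by
  rw [sepIndex, Finset.sum_sigma, ← sum_ebar_idOn]
  refine Finset.sum_congr rfl fun X _ => ?_
  have hterm : ∀ t ∈ injWithDom X,
      (weight X • ebar (inv t)) * ebar t = weight X • ebar (idOn X) := by
    intro t ht
    obtain ⟨hti, rfl⟩ := mem_injWithDom.mp ht
    rw [smul_mul_assoc, ebar_mul_ebar, if_pos (dom_inv hti), inv_comp_self hti]
  have hcard : ((injWithDom X).card : ℂ) ≠ 0 :=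
    Nat.cast_ne_zero.mpr (Finset.card_ne_zero.mpr ⟨_, idOn_mem_injWithDom X⟩)
  rw [Finset.sum_congr rfl hterm, Finset.sum_const, ← Nat.cast_smul_eq_nsmul ℂ, smul_smul,
    weight, mul_inv_cancel₀ hcard, one_smul]

lemma sum_sepIndex_ebar_mul_tmul (s : PT n) :
    ∑ i ∈ sepIndex n, (ebar s * (weight i.1 • ebar (inv i.2))) ⊗ₜ[ℂ] ebar i.2 =
      ∑ i ∈ sepIndex n, (weight i.1 • ebar (inv i.2)) ⊗ₜ[ℂ] (ebar i.2 * ebar s) := by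
  by_cases hs : Inj s
  swap
  · simp [ebar_eq_zero hs]
  -- only `X = dom s` contributes on the left and `X = ran s` on the right; `t ↦ t ∘ s` matches
  -- the two sums term by term
  simp only [sepIndex, Finset.sum_sigma]
  rw [Finset.sum_eq_single (dom s), Finset.sum_eq_single (ran s)]
  · rw [← sum_injWithDom_ran_comp hs]
    refine Finset.sum_congr rfl fun t ht => ?_
    obtain ⟨hti, htd⟩ := mem_injWithDom.mp ht
    rw [ebar_mul_ebar t s, if_pos htd, weight_ran hs, mul_smul_comm, ebar_mul_ebar,
      if_pos (by rw [ran_inv (hti.comp hs), dom_comp htd]), comp_inv_comp hs hti htd]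
  · intro X _ hX
    refine Finset.sum_eq_zero fun t ht => ?_
    obtain ⟨_, rfl⟩ := mem_injWithDom.mp ht
    rw [ebar_mul_ebar, if_neg hX, tmul_zero]
  · simp
  · intro X _ hX
    refine Finset.sum_eq_zero fun t ht => ?_
    obtain ⟨hti, rfl⟩ := mem_injWithDom.mp ht
    rw [mul_smul_comm, ebar_mul_ebar, if_neg (by rw [ran_inv hti]; exact Ne.symm hX), smul_zero,
      zero_tmul]
  · simp

lemma sum_sepIndex_mul_tmul (x : QuotNonInj n) :
    ∑ i ∈ sepIndex n, (x * (weight i.1 • ebar (inv i.2))) ⊗ₜ[ℂ] ebar i.2 =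
      ∑ i ∈ sepIndex n, (weight i.1 • ebar (inv i.2)) ⊗ₜ[ℂ] (ebar i.2 * x) := by
  have hx : x ∈ Submodule.span ℂ (Set.range ebar) := span_range_ebar ▸ Submodule.mem_top
  induction hx using Submodule.span_induction with
  | mem _ h => obtain ⟨s, rfl⟩ := h; exact sum_sepIndex_ebar_mul_tmul s
  | zero => simp
  | add x y _ _ hx hy =>
    simp only [add_mul, mul_add, add_tmul, tmul_add, Finset.sum_add_distrib, hx, hy]
  | smul c x _ hx =>
    have hl (a b : QuotNonInj n) : ((c • x) * a) ⊗ₜ[ℂ] b = c • ((x * a) ⊗ₜ[ℂ] b) :=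
      by rw [smul_mul_assoc, smul_tmul']
    have hr (a b : QuotNonInj n) : a ⊗ₜ[ℂ] (b * (c • x)) = c • (a ⊗ₜ[ℂ] (b * x)) :=
      by rw [mul_smul_comm, tmul_smul]
    simp only [hl, hr, ← Finset.smul_sum, hx]

instance isSemisimpleRing_quot (n : ℕ) : IsSemisimpleRing (QuotNonInj n) :=
  IsSemisimpleModule.of_sum_tmul_comm (k := ℂ) (sepIndex n) _ _ sum_sepIndex_mul
    sum_sepIndex_mul_tmul _

end PTAlg

open PT PTAlg in
/-- In the convolution algebra `A_n`, the linear span `R` of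
`{e_t : t ∈ PT_n, t not injective}` is a two-sided ideal equal to the Jacobson radical of
`A_n`; equivalently, `R` is a nilpotent two-sided ideal such that `A_n/R` is semisimple. -/
theorem radical_of_convolution_algebra (n : ℕ) :
    ∀ S : Set (PTAlg n), S = {x | ∃ t : PT n, ¬ Inj t ∧ x = e t} →
    ∀ R : Submodule ℂ (PTAlg n), R = Submodule.span ℂ S →
      (∀ r ∈ R, ∀ a : PTAlg n, a * r ∈ R ∧ r * a ∈ R) ∧
      (∀ x : PTAlg n, x ∈ R ↔ x ∈ Ideal.jacobson (⊥ : Ideal (PTAlg n))) ∧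
      (∃ m : ℕ, R ^ m = ⊥) ∧
      (∀ x : PTAlg n, x ∈ R ↔ x ∈ TwoSidedIdeal.span S) ∧
      IsSemisimpleRing (TwoSidedIdeal.span S).ringCon.Quotient := by
  rintro S rfl R rfl
  refine ⟨fun r hr a => ⟨mul_mem_nonInjSpan_left a hr, mul_mem_nonInjSpan_right a hr⟩,
    fun x => ⟨fun hx => ?_, fun hx => ?_⟩, ⟨n + 1, nonInjSpan_pow_eq_bot⟩,
    fun x => mem_twoSidedSpan_nonInjBasis.symm, isSemisimpleRing_quot n⟩
  · exact mem_jacobson_bot_of_isNilpotent_mul fun y =>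
      isNilpotent_of_mem_nonInjSpan (mul_mem_nonInjSpan_left y hx)
  · exact mem_twoSidedSpan_nonInjBasis.mp ((TwoSidedIdeal.span _).mem_of_mem_jacobson_bot hx)
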